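/- If ρ is a nonnegative function on S×A with ∑_a ρ(s,a) > 0 for all s, and π is defined by π(a|s) = ρ(s,a)/∑_{a'} ρ(s,a'), then π(·|s) is a probability distribution over A for every s, and if ρ and ρ' are two occupancy measures inducing the same policy via this formula and both satisfy the same Bellman flow constraints ∑_a ρ(s,a) = μ(s) + γ ∑_{s',a'} P(s|s',a') ρ(s',a') for all s, then ρ = ρ'. -/
import Mathlib


open scoped BigOperators

/-- If `ρ` is nonnegative on `S × A` with `∑_a ρ(s,a) > 0` for all `s`,
then `π(a|s) = ρ(s,a) / ∑_{a'} ρ(s,a')` is a probability distribution over `A` for each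
`s`; and if two such occupancy measures `ρ, ρ'` induce the same policy and both satisfy
the Bellman flow constraints
`∑_a ρ(s,a) = μ(s) + γ ∑_{s',a'} P(s|s',a') ρ(s',a')`, then `ρ = ρ'`. -/
theorem occupancy_policy_unique
    {S A : Type*} [Fintype S] [Fintype A]
    (γ : ℝ) (hγ0 : 0 < γ) (hγ1 : γ < 1)
    (P : S → A → S → ℝ) (hPnonneg : ∀ s a s', 0 ≤ P s a s')
    (hPsum : ∀ s a, ∑ s' : S, P s a s' = 1)
    (μ : S → ℝ) (hμnonneg : ∀ s, 0 ≤ μ s) (hμsum : ∑ s : S, μ s = 1)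
    (ρ ρ' : S → A → ℝ)
    (hρnonneg : ∀ s a, 0 ≤ ρ s a) (hρ'nonneg : ∀ s a, 0 ≤ ρ' s a)
    (hρpos : ∀ s, 0 < ∑ a : A, ρ s a) (hρ'pos : ∀ s, 0 < ∑ a : A, ρ' s a)
    (hsamePolicy : ∀ s a, ρ s a / (∑ a' : A, ρ s a') = ρ' s a / (∑ a' : A, ρ' s a'))
    (hflow : ∀ s, ∑ a : A, ρ s a
        = μ s + γ * ∑ s' : S, ∑ a' : A, P s' a' s * ρ s' a')
    (hflow' : ∀ s, ∑ a : A, ρ' s a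
        = μ s + γ * ∑ s' : S, ∑ a' : A, P s' a' s * ρ' s' a') :
    (∀ s, (∀ a, 0 ≤ ρ s a / (∑ a' : A, ρ s a')) ∧
        ∑ a : A, ρ s a / (∑ a' : A, ρ s a') = 1) ∧
    ρ = ρ' := by
  have hFne : ∀ s, (∑ a : A, ρ s a) ≠ 0 := fun s => (hρpos s).ne'
  have hGne : ∀ s, (∑ a : A, ρ' s a) ≠ 0 := fun s => (hρ'pos s).ne'
  constructor
  · intro s
    refine ⟨fun a => div_nonneg (hρnonneg s a) (hρpos s).le, ?_⟩
    rw [← Finset.sum_div, div_self (hFne s)]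
  · set F : S → ℝ := fun s => ∑ a : A, ρ s a with hF
    set G : S → ℝ := fun s => ∑ a : A, ρ' s a with hG
    set π : S → A → ℝ := fun s a => ρ s a / F s with hπ
    have hρeq : ∀ s a, ρ s a = π s a * F s := fun s a =>
      (div_mul_cancel₀ _ (hFne s)).symm
    have hρ'eq : ∀ s a, ρ' s a = π s a * G s := by
      intro s a
      show ρ' s a = ρ s a / F s * G s
      rw [hF]; simp only
      rw [hsamePolicy s a]
      exact (div_mul_cancel₀ _ (hGne s)).symm
    have hπnonneg : ∀ s a, 0 ≤ π s a := fun s a =>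
      div_nonneg (hρnonneg s a) (hρpos s).le
    have hπsum : ∀ s, ∑ a : A, π s a = 1 := by
      intro s
      show (∑ a : A, ρ s a / F s) = 1
      rw [← Finset.sum_div]
      exact div_self (hFne s)
    set h : S → ℝ := fun s => F s - G s with hh
    have key : ∀ s, h s = γ * ∑ s' : S, ∑ a : A, P s' a s * π s' a * h s' := by
      intro s
      have inner : ∀ s', ∑ a : A, P s' a s * π s' a * h s'
          = (∑ a' : A, P s' a' s * ρ s' a') - ∑ a' : A, P s' a' s * ρ' s' a' := by
        intro s'
        rw [← Finset.sum_sub_distrib]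
        refine Finset.sum_congr rfl fun a _ => ?_
        have hhs : h s' = F s' - G s' := rfl
        rw [hhs, hρeq s' a, hρ'eq s' a]; ring
      have step : h s = γ * ∑ s' : S,
          ((∑ a' : A, P s' a' s * ρ s' a') - ∑ a' : A, P s' a' s * ρ' s' a') := by
        show F s - G s = _
        rw [Finset.sum_sub_distrib, mul_sub, hF, hG]
        simp only
        rw [hflow s, hflow' s]; ring
      rw [step]
      congr 1
      exact (Finset.sum_congr rfl fun s' _ => inner s').symm
    have habs : ∀ s, |h s| ≤ γ * ∑ s' : S, (∑ a : A, P s' a s * π s' a) * |h s'| := by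
      intro s
      rw [key s, abs_mul, abs_of_pos hγ0]
      apply mul_le_mul_of_nonneg_left _ hγ0.le
      calc |∑ s' : S, ∑ a : A, P s' a s * π s' a * h s'|
          ≤ ∑ s' : S, |∑ a : A, P s' a s * π s' a * h s'| := Finset.abs_sum_le_sum_abs _ _
        _ ≤ ∑ s' : S, (∑ a : A, P s' a s * π s' a) * |h s'| := by
            refine Finset.sum_le_sum fun s' _ => ?_
            calc |∑ a : A, P s' a s * π s' a * h s'|
                ≤ ∑ a : A, |P s' a s * π s' a * h s'| := Finset.abs_sum_le_sum_abs _ _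
              _ = ∑ a : A, P s' a s * π s' a * |h s'| := by
                  refine Finset.sum_congr rfl fun a _ => ?_
                  rw [abs_mul, abs_of_nonneg (mul_nonneg (hPnonneg s' a s) (hπnonneg s' a))]
              _ = (∑ a : A, P s' a s * π s' a) * |h s'| := by rw [Finset.sum_mul]
    have hT : (∑ s : S, |h s|) ≤ γ * ∑ s : S, |h s| := by
      calc (∑ s : S, |h s|)
          ≤ ∑ s : S, γ * ∑ s' : S, (∑ a : A, P s' a s * π s' a) * |h s'| :=
            Finset.sum_le_sum fun s _ => habs s
        _ = γ * ∑ s : S, ∑ s' : S, (∑ a : A, P s' a s * π s' a) * |h s'| := by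
            rw [Finset.mul_sum]
        _ = γ * ∑ s' : S, ∑ s : S, (∑ a : A, P s' a s * π s' a) * |h s'| := by
            rw [Finset.sum_comm]
        _ = γ * ∑ s : S, |h s| := by
            congr 1
            refine Finset.sum_congr rfl fun s' _ => ?_
            rw [← Finset.sum_mul]
            have hone : ∑ s : S, ∑ a : A, P s' a s * π s' a = 1 := by
              rw [Finset.sum_comm]
              calc ∑ a : A, ∑ s : S, P s' a s * π s' a
                  = ∑ a : A, π s' a * ∑ s : S, P s' a s := by
                    refine Finset.sum_congr rfl fun a _ => ?_
                    rw [Finset.mul_sum]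
                    exact Finset.sum_congr rfl fun s _ => by ring
                _ = ∑ a : A, π s' a :=
                    Finset.sum_congr rfl fun a _ => by rw [hPsum s' a, mul_one]
                _ = 1 := hπsum s'
            rw [hone, one_mul]
    have hTnonneg : 0 ≤ ∑ s : S, |h s| := Finset.sum_nonneg fun s _ => abs_nonneg _
    have hT0 : (∑ s : S, |h s|) = 0 := by nlinarith
    have hzero : ∀ s, h s = 0 := by
      intro s
      have := (Finset.sum_eq_zero_iff_of_nonneg
        fun s (_ : s ∈ Finset.univ) => abs_nonneg (h s)).mp hT0 s (Finset.mem_univ s)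
      exact abs_eq_zero.mp this
    funext s a
    rw [hρeq s a, hρ'eq s a]
    have hFG : F s = G s := by
      have := hzero s
      have hhs : h s = F s - G s := rfl
      rw [hhs] at this; linarith
    rw [hFG]
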